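/- Let (F̂(v)_d) be a composite F-family and set F^c(w)_d = F̂(expand(w))_d. Let τ be a permutation of D with τ({(j,m) : 1 ≤ m ≤ r_j}) = {(j,m) : 1 ≤ m ≤ r_j} for every j ∈ {1,…,n}, and let τ* be the field automorphism of K determined by τ*(ỹ_d) = ỹ_{τ(d)}. Then for every word w over {1,…,n} and every d ∈ D: τ*(F^c(w)_d) = F^c(w)_{τ(d)}. -/

import Mathlib

/-- `[x]₊ = max(x,0)`. -/
def intPos (x : ℤ) : ℤ := max x 0

/-- The index set `D = {(i,l) : 1 ≤ i ≤ n, 1 ≤ l ≤ r i}`. -/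
abbrev DIdx (n : ℕ) (r : Fin n → ℕ) := Σ i : Fin n, Fin (r i)

/-- Ordinary matrix mutation of a `D × D` integer matrix in direction `p`. -/
def matMut {n : ℕ} {r : Fin n → ℕ} (M : DIdx n r → DIdx n r → ℤ) (p : DIdx n r) :
    DIdx n r → DIdx n r → ℤ :=
  fun d e =>
    if d = p ∨ e = p then -M d e
    else M d e + M d p * intPos (M p e) + intPos (-(M d p)) * M p e

/-- Generalized matrix mutation `μ^r_k` of an `n × n` integer matrix. -/
def genMut {n : ℕ} (r : Fin n → ℕ) (B : Matrix (Fin n) (Fin n) ℤ) (k : Fin n) :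
    Matrix (Fin n) (Fin n) ℤ :=
  Matrix.of fun i j =>
    if i = k ∨ j = k then -B i j
    else B i j + (r k : ℤ) * (B i k * intPos (B k j) + intPos (-(B i k)) * B k j)

/-- The enlargement of an `n × n` integer matrix `B`. -/
def enlarge {n : ℕ} (r : Fin n → ℕ) (B : Matrix (Fin n) (Fin n) ℤ) :
    DIdx n r → DIdx n r → ℤ :=
  fun d e => B d.1 e.1

/-- The identity `D × D` matrix. -/
def idMat {n : ℕ} {r : Fin n → ℕ} : DIdx n r → DIdx n r → ℤ :=
  fun d e => if d = e then 1 else 0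

/-- One mutation step for the triple `(B̂, Ĉ, Ĝ)` in direction `p ∈ D`; `E0 = B̂(∅)`. -/
def hatStep {n : ℕ} {r : Fin n → ℕ} (E0 : DIdx n r → DIdx n r → ℤ)
    (st : (DIdx n r → DIdx n r → ℤ) × (DIdx n r → DIdx n r → ℤ) × (DIdx n r → DIdx n r → ℤ))
    (p : DIdx n r) :
    (DIdx n r → DIdx n r → ℤ) × (DIdx n r → DIdx n r → ℤ) × (DIdx n r → DIdx n r → ℤ) :=
  (matMut st.1 p,
   fun d e =>
     if e = p then -(st.2.1 d p)
     else st.2.1 d e + st.2.1 d p * intPos (st.1 p e) + intPos (-(st.2.1 d p)) * st.1 p e,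
   fun d e =>
     if e = p then
       -(st.2.2 d p) + ∑ a : DIdx n r,
         (st.2.2 d a * intPos (-(st.1 a p)) - E0 d a * intPos (-(st.2.1 a p)))
     else st.2.2 d e)

/-- The triple `(B̂(v), Ĉ(v), Ĝ(v))` attached to a word `v` over `D`. -/
def hatPat {n : ℕ} (r : Fin n → ℕ) (B₀ : Matrix (Fin n) (Fin n) ℤ) (v : List (DIdx n r)) :
    (DIdx n r → DIdx n r → ℤ) × (DIdx n r → DIdx n r → ℤ) × (DIdx n r → DIdx n r → ℤ) :=
  v.foldl (hatStep (enlarge r B₀)) (enlarge r B₀, idMat, idMat)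

/-- `expand w`: replace each letter `k` of `w` by `(k,1), (k,2), …, (k,r_k)`. -/
def expandWord {n : ℕ} (r : Fin n → ℕ) (w : List (Fin n)) : List (DIdx n r) :=
  w.flatMap fun k => (List.finRange (r k)).map fun l => ⟨k, l⟩

/-- The composite matrices `B^c(w) = B̂(expand w)`, `C^c(w) = Ĉ(expand w)`,
`G^c(w) = Ĝ(expand w)`. -/
def Bc {n : ℕ} (r : Fin n → ℕ) (B₀ : Matrix (Fin n) (Fin n) ℤ) (w : List (Fin n)) :
    DIdx n r → DIdx n r → ℤ := (hatPat r B₀ (expandWord r w)).1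

def Cc {n : ℕ} (r : Fin n → ℕ) (B₀ : Matrix (Fin n) (Fin n) ℤ) (w : List (Fin n)) :
    DIdx n r → DIdx n r → ℤ := (hatPat r B₀ (expandWord r w)).2.1

def Gc {n : ℕ} (r : Fin n → ℕ) (B₀ : Matrix (Fin n) (Fin n) ℤ) (w : List (Fin n)) :
    DIdx n r → DIdx n r → ℤ := (hatPat r B₀ (expandWord r w)).2.2

/-- One mutation step for the triple `(B, C^g, G^g)` in direction `k ∈ {1,…,n}`. -/
def genStep {n : ℕ} (r : Fin n → ℕ) (B₀ : Matrix (Fin n) (Fin n) ℤ)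
    (st : Matrix (Fin n) (Fin n) ℤ × Matrix (Fin n) (Fin n) ℤ × Matrix (Fin n) (Fin n) ℤ)
    (k : Fin n) :
    Matrix (Fin n) (Fin n) ℤ × Matrix (Fin n) (Fin n) ℤ × Matrix (Fin n) (Fin n) ℤ :=
  (genMut r st.1 k,
   Matrix.of fun i j =>
     if j = k then -(st.2.1 i k)
     else st.2.1 i j + (r k : ℤ) * (st.2.1 i k * intPos (st.1 k j)
       + intPos (-(st.2.1 i k)) * st.1 k j),
   Matrix.of fun i j =>
     if j = k then
       -(st.2.2 i k) + (r k : ℤ) * ∑ a : Fin n,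
         (st.2.2 i a * intPos (-(st.1 a k)) - B₀ i a * intPos (-(st.2.1 a k)))
     else st.2.2 i j)

/-- The triple `(B(w), C^g(w), G^g(w))` attached to a word `w` over `{1,…,n}`. -/
def genPat {n : ℕ} (r : Fin n → ℕ) (B₀ : Matrix (Fin n) (Fin n) ℤ) (w : List (Fin n)) :
    Matrix (Fin n) (Fin n) ℤ × Matrix (Fin n) (Fin n) ℤ × Matrix (Fin n) (Fin n) ℤ :=
  w.foldl (genStep r B₀) (B₀, 1, 1)

/-- The sign `σ_{j;w} = (−1)^{number of occurrences of j in w}`. -/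
def sigmaSign {n : ℕ} (w : List (Fin n)) (j : Fin n) : ℤ := (-1) ^ (w.count j)

/-- The Kronecker delta on `D`. -/
def deltaD {n : ℕ} {r : Fin n → ℕ} (d e : DIdx n r) : ℤ := if d = e then 1 else 0

/-- The ambient field `K = ℚ(ỹ_d : d ∈ D)` of rational functions in the indeterminates `ỹ_d`. -/
abbrev Kfield (n : ℕ) (r : Fin n → ℕ) := FractionRing (MvPolynomial (DIdx n r) ℚ)

/-- The indeterminate `ỹ_d` viewed inside `K`. -/
noncomputable def Yt {n : ℕ} {r : Fin n → ℕ} (d : DIdx n r) : Kfield n r :=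
  algebraMap (MvPolynomial (DIdx n r) ℚ) (Kfield n r) (MvPolynomial.X d)

section Aux

variable {n : ℕ} {r : Fin n → ℕ}

lemma intPos_of_nonneg {x : ℤ} (h : 0 ≤ x) : intPos x = x := max_eq_left h

lemma intPos_of_nonpos {x : ℤ} (h : x ≤ 0) : intPos x = 0 := max_eq_right h

@[simp] lemma intPos_zero : intPos 0 = 0 := rfl

lemma hatPat_concat (B₀ : Matrix (Fin n) (Fin n) ℤ) (v : List (DIdx n r)) (p : DIdx n r) :
    hatPat r B₀ (v ++ [p]) = hatStep (enlarge r B₀) (hatPat r B₀ v) p := by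
  simp [hatPat, List.foldl_append]

lemma expandWord_concat (w : List (Fin n)) (k : Fin n) :
    expandWord r (w ++ [k])
      = expandWord r w ++ (List.finRange (r k)).map (fun l => (⟨k, l⟩ : DIdx n r)) := by
  simp [expandWord]

lemma mem_block_fst {k : Fin n} {L : List (Fin (r k))} {d : DIdx n r}
    (h : d ∈ L.map (fun l => (⟨k, l⟩ : DIdx n r))) : d.1 = k := by
  obtain ⟨l, _, rfl⟩ := List.mem_map.mp h; rfl

lemma mk_mem_block {k : Fin n} {L : List (Fin (r k))} {l : Fin (r k)} :
    (⟨k, l⟩ : DIdx n r) ∈ L.map (fun m => (⟨k, m⟩ : DIdx n r)) ↔ l ∈ L := by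
  simp

end Aux

lemma block_lemma {n : ℕ} {r : Fin n → ℕ}
    (B₀ : Matrix (Fin n) (Fin n) ℤ)
    (Fhat : List (DIdx n r) → DIdx n r → Kfield n r)
    (hFne : ∀ v d, Fhat v d ≠ 0)
    (hFfix : ∀ v (p d : DIdx n r), d ≠ p → Fhat (v ++ [p]) d = Fhat v d)
    (hFrec : ∀ v (p : DIdx n r),
      Fhat (v ++ [p]) p * Fhat v p
        = (∏ d : DIdx n r, Yt d ^ intPos (-((hatPat r B₀ v).2.1 d p))
            * Fhat v d ^ intPos (-((hatPat r B₀ v).1 d p)))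
          * (1 + ∏ d : DIdx n r, Yt d ^ ((hatPat r B₀ v).2.1 d p)
            * Fhat v d ^ ((hatPat r B₀ v).1 d p)))
    (v : List (DIdx n r)) (k : Fin n)
    (β γ : Fin n → Fin n → ℤ) (ε : Fin n → ℤ)
    (hβkk : β k k = 0)
    (hB : ∀ d e : DIdx n r, (hatPat r B₀ v).1 d e = β d.1 e.1)
    (hC : ∀ d e : DIdx n r, (hatPat r B₀ v).2.1 d e = γ d.1 e.1 + (if d = e then ε e.1 else 0))
    (L : List (Fin (r k))) :
    L.Nodup →
    (∀ d e : DIdx n r,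
        (hatPat r B₀ (v ++ L.map (fun l => (⟨k, l⟩ : DIdx n r)))).1 d e =
          if d.1 = k then
            (if e.1 = k then 0
             else (if d ∈ L.map (fun l => (⟨k, l⟩ : DIdx n r)) then -1 else 1) * β k e.1)
          else if e.1 = k then
            (if e ∈ L.map (fun l => (⟨k, l⟩ : DIdx n r)) then -1 else 1) * β d.1 k
          else β d.1 e.1
            + (L.length : ℤ) * (β d.1 k * intPos (β k e.1) + intPos (-(β d.1 k)) * β k e.1))
    ∧ (∀ d e : DIdx n r,
        (hatPat r B₀ (v ++ L.map (fun l => (⟨k, l⟩ : DIdx n r)))).2.1 d e =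
          if e.1 = k then
            (if e ∈ L.map (fun l => (⟨k, l⟩ : DIdx n r)) then -1 else 1)
              * (γ d.1 k + (if d = e then ε k else 0))
          else γ d.1 e.1 + (if d = e then ε e.1 else 0)
            + (L.map (fun l =>
                (γ d.1 k + (if d = ⟨k, l⟩ then ε k else 0)) * intPos (β k e.1)
                + intPos (-(γ d.1 k + (if d = ⟨k, l⟩ then ε k else 0))) * β k e.1)).sum)
    ∧ (∀ d : DIdx n r,
        Fhat (v ++ L.map (fun l => (⟨k, l⟩ : DIdx n r))) d =
          if d ∈ L.map (fun l => (⟨k, l⟩ : DIdx n r)) then Fhat (v ++ [d]) d else Fhat v d) := by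
  induction L using List.reverseRecOn with
  | nil =>
    intro _
    refine ⟨?_, ?_, ?_⟩
    · intro d e
      simp only [List.map_nil, List.append_nil, List.not_mem_nil, if_false, List.length_nil,
        Nat.cast_zero, zero_mul, add_zero]
      rw [hB d e]
      by_cases hd : d.1 = k <;> by_cases he : e.1 = k <;> simp [hd, he, hβkk]
    · intro d e
      simp only [List.map_nil, List.append_nil, List.not_mem_nil, if_false, List.sum_nil,
        add_zero]
      rw [hC d e]
      by_cases he : e.1 = k <;> simp [he]
    · intro d
      simp
  | append_singleton L l ih =>
    intro hnd
    rw [List.nodup_append] at hnd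
    obtain ⟨ihB, ihC, ihF⟩ := ih hnd.1
    have hlL : l ∉ L := fun hm => hnd.2.2 l hm l (List.mem_singleton_self l) rfl
    set p : DIdx n r := (⟨k, l⟩ : DIdx n r) with hpdef
    have hpfst : p.1 = k := rfl
    have hpLm : p ∉ L.map (fun m => (⟨k, m⟩ : DIdx n r)) := by
      rw [hpdef, mk_mem_block]; exact hlL
    have hword : v ++ (L ++ [l]).map (fun m => (⟨k, m⟩ : DIdx n r))
        = (v ++ L.map (fun m => (⟨k, m⟩ : DIdx n r))) ++ [p] := by
      rw [List.map_append, List.map_singleton, ← List.append_assoc]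
    have hmem' : ∀ d : DIdx n r,
        d ∈ (L ++ [l]).map (fun m => (⟨k, m⟩ : DIdx n r))
          ↔ d ∈ L.map (fun m => (⟨k, m⟩ : DIdx n r)) ∨ d = p := by
      intro d; simp [List.map_append, hpdef]
    set W := v ++ L.map (fun m => (⟨k, m⟩ : DIdx n r)) with hWdef
    have hstep : hatPat r B₀ (W ++ [p]) = hatStep (enlarge r B₀) (hatPat r B₀ W) p :=
      hatPat_concat B₀ W p
    have hBcolp : ∀ e : DIdx n r, (hatPat r B₀ W).1 e p = β e.1 k := by
      intro e
      rw [ihB]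
      by_cases he : e.1 = k <;> simp [he, hpfst, hpLm, hβkk]
    have hCcolp : ∀ e : DIdx n r,
        (hatPat r B₀ W).2.1 e p = γ e.1 k + (if e = p then ε k else 0) := by
      intro e; rw [ihC]; simp [hpfst, hpLm]
    have hBrowp : ∀ e : DIdx n r,
        (hatPat r B₀ W).1 p e = if e.1 = k then 0 else β k e.1 := by
      intro e; rw [ihB]; simp [hpfst, hpLm]
    have hmemp : p ∈ (L ++ [l]).map (fun m => (⟨k, m⟩ : DIdx n r)) := (hmem' p).mpr (Or.inr rfl)
    refine ⟨?_, ?_, ?_⟩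
    · intro d e
      rw [hword, hstep]
      show matMut (hatPat r B₀ W).1 p d e = _
      rw [matMut]
      by_cases hdp : d = p
      · subst hdp
        rw [if_pos (Or.inl rfl), hBrowp e]
        by_cases he : e.1 = k <;> simp [he, hpfst, hmemp, hpdef] <;> ring
      · by_cases hep : e = p
        · subst hep
          rw [if_pos (Or.inr rfl), hBcolp d]
          by_cases hd : d.1 = k <;> simp [hd, hpfst, hmemp, hβkk, hpdef]
        · rw [if_neg (by tauto), hBcolp d, hBrowp e, ihB d e]
          have hdm : (d ∈ (L ++ [l]).map (fun m => (⟨k, m⟩ : DIdx n r)))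
              ↔ d ∈ L.map (fun m => (⟨k, m⟩ : DIdx n r)) := by
            rw [hmem' d]; simp [hdp]
          have hem : (e ∈ (L ++ [l]).map (fun m => (⟨k, m⟩ : DIdx n r)))
              ↔ e ∈ L.map (fun m => (⟨k, m⟩ : DIdx n r)) := by
            rw [hmem' e]; simp [hep]
          have hdp2 : ¬(d = (⟨k, l⟩ : DIdx n r)) := hdp
          have hep2 : ¬(e = (⟨k, l⟩ : DIdx n r)) := hep
          by_cases hd : d.1 = k <;> by_cases he : e.1 = k
          · simp [hd, he, hdm, hem, hdp2, hep2, hβkk]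
          · simp [hd, he, hdm, hem, hdp2, hep2, hβkk]
          · simp [hd, he, hdm, hem, hdp2, hep2, hβkk]
          · simp only [hd, he, hdm, hem, if_false, List.length_append, List.length_singleton]
            push_cast
            ring
    · intro d e
      rw [hword, hstep]
      show (if e = p then -((hatPat r B₀ W).2.1 d p)
        else (hatPat r B₀ W).2.1 d e + (hatPat r B₀ W).2.1 d p * intPos ((hatPat r B₀ W).1 p e)
          + intPos (-((hatPat r B₀ W).2.1 d p)) * (hatPat r B₀ W).1 p e) = _
      by_cases hep : e = p
      · subst hep
        rw [if_pos rfl, hCcolp d]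
        simp [hpfst, hmemp, hpdef]
      · rw [if_neg hep, hCcolp d, hBrowp e, ihC d e]
        have hem : (e ∈ (L ++ [l]).map (fun m => (⟨k, m⟩ : DIdx n r)))
            ↔ e ∈ L.map (fun m => (⟨k, m⟩ : DIdx n r)) := by
          rw [hmem' e]; simp [hep]
        by_cases he : e.1 = k
        · have hep2 : ¬(e = (⟨k, l⟩ : DIdx n r)) := hep
          simp [he, hem, hep2]
        · simp only [he, if_false, List.map_append, List.map_singleton, List.sum_append,
            List.sum_cons, List.sum_nil, add_zero]
          rw [← hpdef]
          ring
    · intro d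
      rw [hword]
      by_cases hdp : d = p
      · subst hdp
        rw [if_pos hmemp]
        have h1 := hFrec W p
        have h2 := hFrec v p
        have hFWp : Fhat W p = Fhat v p := by rw [ihF p, if_neg hpLm]
        have hprod1 :
            (∏ e : DIdx n r, Yt e ^ intPos (-((hatPat r B₀ W).2.1 e p))
              * Fhat W e ^ intPos (-((hatPat r B₀ W).1 e p)))
            = ∏ e : DIdx n r, Yt e ^ intPos (-((hatPat r B₀ v).2.1 e p))
              * Fhat v e ^ intPos (-((hatPat r B₀ v).1 e p)) := by
          refine Finset.prod_congr rfl fun e _ => ?_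
          rw [hBcolp e, hB e p, hCcolp e, hC e p]
          by_cases hm : e ∈ L.map (fun m => (⟨k, m⟩ : DIdx n r))
          · have he1 : e.1 = k := mem_block_fst hm
            simp [he1, hβkk, hpfst]
          · rw [ihF e, if_neg hm]
        have hprod2 :
            (∏ e : DIdx n r, Yt e ^ ((hatPat r B₀ W).2.1 e p)
              * Fhat W e ^ ((hatPat r B₀ W).1 e p))
            = ∏ e : DIdx n r, Yt e ^ ((hatPat r B₀ v).2.1 e p)
              * Fhat v e ^ ((hatPat r B₀ v).1 e p) := by
          refine Finset.prod_congr rfl fun e _ => ?_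
          rw [hBcolp e, hB e p, hCcolp e, hC e p]
          by_cases hm : e ∈ L.map (fun m => (⟨k, m⟩ : DIdx n r))
          · have he1 : e.1 = k := mem_block_fst hm
            simp [he1, hβkk, hpfst]
          · rw [ihF e, if_neg hm]
        rw [hprod1, hprod2, hFWp] at h1
        rw [← h2] at h1
        exact mul_right_cancel₀ (hFne v p) h1
      · rw [hFfix W p d hdp, ihF d]
        have hdm : (d ∈ (L ++ [l]).map (fun m => (⟨k, m⟩ : DIdx n r)))
            ↔ d ∈ L.map (fun m => (⟨k, m⟩ : DIdx n r)) := by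
          rw [hmem' d]; simp [hdp]
        simp only [hdm]

/-- If `(F̂(v)_d)` is a composite `F`-family, `F^c(w)_d = F̂(expand w)_d`,
`τ` a permutation of `D` preserving each block `D_j`, and `τ*` the field endomorphism of `K`
with `τ*(ỹ_d) = ỹ_{τ(d)}`, then `τ*(F^c(w)_d) = F^c(w)_{τ(d)}`. -/
theorem composite_F_polynomials_symmetry {n : ℕ} (hn : 1 ≤ n) (r : Fin n → ℕ)
    (hr : ∀ i, 1 ≤ r i) (B₀ : Matrix (Fin n) (Fin n) ℤ)
    (hskew : ∃ d : Fin n → ℚ, (∀ i, 0 < d i) ∧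
      ∀ i j, d i * (B₀ i j : ℚ) = -(d j * (B₀ j i : ℚ)))
    (Fhat : List (DIdx n r) → DIdx n r → Kfield n r)
    (hFne : ∀ v d, Fhat v d ≠ 0)
    (hF0 : ∀ d, Fhat [] d = 1)
    (hFfix : ∀ v (p d : DIdx n r), d ≠ p → Fhat (v ++ [p]) d = Fhat v d)
    (hFrec : ∀ v (p : DIdx n r),
      Fhat (v ++ [p]) p * Fhat v p
        = (∏ d : DIdx n r, Yt d ^ intPos (-((hatPat r B₀ v).2.1 d p))
            * Fhat v d ^ intPos (-((hatPat r B₀ v).1 d p)))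
          * (1 + ∏ d : DIdx n r, Yt d ^ ((hatPat r B₀ v).2.1 d p)
            * Fhat v d ^ ((hatPat r B₀ v).1 d p)))
    (τ : Equiv.Perm (DIdx n r)) (hτ : ∀ d : DIdx n r, (τ d).1 = d.1)
    (τs : Kfield n r →+* Kfield n r) (hτs : ∀ d : DIdx n r, τs (Yt d) = Yt (τ d))
    (w : List (Fin n)) (d : DIdx n r) :
    τs (Fhat (expandWord r w) d) = Fhat (expandWord r w) (τ d) := by
  
  classical
  obtain ⟨dd, hdd, hddskew⟩ := hskew
  suffices H : ∀ w' : List (Fin n),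
      ∃ (β γ : Fin n → Fin n → ℤ) (ε : Fin n → ℤ),
        (∀ i j, (dd i) * (β i j : ℚ) = -((dd j) * (β j i : ℚ)))
        ∧ (∀ d e : DIdx n r, (hatPat r B₀ (expandWord r w')).1 d e = β d.1 e.1)
        ∧ (∀ d e : DIdx n r, (hatPat r B₀ (expandWord r w')).2.1 d e
              = γ d.1 e.1 + (if d = e then ε e.1 else 0))
        ∧ (∀ d : DIdx n r,
            τs (Fhat (expandWord r w') d) = Fhat (expandWord r w') (τ d)) by
    obtain ⟨β, γ, ε, _, _, _, h4⟩ := H w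
    exact h4 d
  intro w'
  induction w' using List.reverseRecOn with
  | nil =>
    refine ⟨fun i j => B₀ i j, fun _ _ => 0, fun _ => 1, hddskew, ?_, ?_, ?_⟩
    · intro d e; simp [expandWord, hatPat, enlarge]
    · intro d e; simp [expandWord, hatPat, idMat]
    · intro d; simp [expandWord, hF0]
  | append_singleton w k ih =>
    obtain ⟨β, γ, ε, hβ, hB, hC, hFτ⟩ := ih
    have hβkk : β k k = 0 := by
      have h1 : dd k * (β k k : ℚ) = 0 := by linarith [hβ k k]
      have h2 : (β k k : ℚ) = 0 := by
        rcases mul_eq_zero.mp h1 with h | h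
        · exact absurd h (ne_of_gt (hdd k))
        · exact h
      exact_mod_cast h2
    set v := expandWord r w with hv
    have hexp : expandWord r (w ++ [k])
        = v ++ (List.finRange (r k)).map (fun l => (⟨k, l⟩ : DIdx n r)) :=
      expandWord_concat w k
    obtain ⟨MB, MC, MF⟩ := block_lemma B₀ Fhat hFne hFfix hFrec v k β γ ε hβkk hB hC
      (List.finRange (r k)) (List.nodup_finRange _)
    have hmemK : ∀ d : DIdx n r,
        d ∈ (List.finRange (r k)).map (fun l => (⟨k, l⟩ : DIdx n r)) ↔ d.1 = k := by
      intro d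
      constructor
      · exact mem_block_fst
      · intro h
        obtain ⟨i, x⟩ := d
        dsimp at h
        subst h
        exact List.mem_map.mpr ⟨x, List.mem_finRange x, rfl⟩
    -- the key equivariance of one-step mutation values
    have key : ∀ pq : DIdx n r, τs (Fhat (v ++ [pq]) pq) = Fhat (v ++ [τ pq]) (τ pq) := by
      intro pq
      have e1 : Fhat (v ++ [pq]) pq
          = ((∏ e : DIdx n r, Yt e ^ intPos (-((hatPat r B₀ v).2.1 e pq))
              * Fhat v e ^ intPos (-((hatPat r B₀ v).1 e pq)))
            * (1 + ∏ e : DIdx n r, Yt e ^ ((hatPat r B₀ v).2.1 e pq)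
              * Fhat v e ^ ((hatPat r B₀ v).1 e pq))) / Fhat v pq :=
        eq_div_of_mul_eq (hFne v pq) (hFrec v pq)
      have e2 : Fhat (v ++ [τ pq]) (τ pq)
          = ((∏ e : DIdx n r, Yt e ^ intPos (-((hatPat r B₀ v).2.1 e (τ pq)))
              * Fhat v e ^ intPos (-((hatPat r B₀ v).1 e (τ pq))))
            * (1 + ∏ e : DIdx n r, Yt e ^ ((hatPat r B₀ v).2.1 e (τ pq))
              * Fhat v e ^ ((hatPat r B₀ v).1 e (τ pq)))) / Fhat v (τ pq) :=
        eq_div_of_mul_eq (hFne v (τ pq)) (hFrec v (τ pq))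
      have hc2 : ∀ e : DIdx n r,
          (hatPat r B₀ v).2.1 (τ e) (τ pq) = (hatPat r B₀ v).2.1 e pq := by
        intro e
        rw [hC, hC, hτ e, hτ pq]
        simp [Equiv.apply_eq_iff_eq]
      have hb2 : ∀ e : DIdx n r,
          (hatPat r B₀ v).1 (τ e) (τ pq) = (hatPat r B₀ v).1 e pq := by
        intro e
        rw [hB, hB, hτ e, hτ pq]
      have hq1 : τs (∏ e : DIdx n r, Yt e ^ intPos (-((hatPat r B₀ v).2.1 e pq))
              * Fhat v e ^ intPos (-((hatPat r B₀ v).1 e pq)))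
          = ∏ e : DIdx n r, Yt e ^ intPos (-((hatPat r B₀ v).2.1 e (τ pq)))
              * Fhat v e ^ intPos (-((hatPat r B₀ v).1 e (τ pq))) := by
        rw [map_prod]
        rw [← Equiv.prod_comp τ (fun x => Yt x ^ intPos (-((hatPat r B₀ v).2.1 x (τ pq)))
              * Fhat v x ^ intPos (-((hatPat r B₀ v).1 x (τ pq))))]
        refine Finset.prod_congr rfl fun e _ => ?_
        rw [map_mul, map_zpow₀, map_zpow₀, hτs e, hFτ e]
        rw [hc2 e, hb2 e]
      have hq2 : τs (∏ e : DIdx n r, Yt e ^ ((hatPat r B₀ v).2.1 e pq)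
              * Fhat v e ^ ((hatPat r B₀ v).1 e pq))
          = ∏ e : DIdx n r, Yt e ^ ((hatPat r B₀ v).2.1 e (τ pq))
              * Fhat v e ^ ((hatPat r B₀ v).1 e (τ pq)) := by
        rw [map_prod]
        rw [← Equiv.prod_comp τ (fun x => Yt x ^ ((hatPat r B₀ v).2.1 x (τ pq))
              * Fhat v x ^ ((hatPat r B₀ v).1 x (τ pq)))]
        refine Finset.prod_congr rfl fun e _ => ?_
        rw [map_mul, map_zpow₀, map_zpow₀, hτs e, hFτ e]
        rw [hc2 e, hb2 e]
      rw [e1, e2, map_div₀, map_mul, map_add, map_one, hq1, hq2, hFτ pq]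
    refine ⟨(fun i j =>
        if i = k then (if j = k then 0 else -β k j)
        else if j = k then -β i k
        else β i j + (r k : ℤ) * (β i k * intPos (β k j) + intPos (-(β i k)) * β k j)),
      (fun i j =>
        if j = k then -γ i k
        else if i = k then
          γ i j + ((r k : ℤ) - 1) * (γ k k * intPos (β k j) + intPos (-(γ k k)) * β k j)
            + ((γ k k + ε k) * intPos (β k j) + intPos (-(γ k k + ε k)) * β k j)
        else γ i j + (r k : ℤ) * (γ i k * intPos (β k j) + intPos (-(γ i k)) * β k j)),
      (fun j => if j = k then -ε k else ε j), ?_, ?_, ?_, ?_⟩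
    · -- skew-symmetrizability of the new matrix
      intro i j
      by_cases hi : i = k <;> by_cases hj : j = k
      · simp [hi, hj]
      · simp only [hi, hj, if_true, if_false, eq_self_iff_true, ite_true, ite_false,
          reduceIte]
        push_cast
        linarith [hβ k j]
      · simp only [hi, hj, if_true, if_false, eq_self_iff_true, ite_true, ite_false,
          reduceIte]
        push_cast
        linarith [hβ i k]
      · simp only [hi, hj, if_false, ite_false, reduceIte]
        have h0 := hβ i j
        have h1 := hβ i k
        have h2 := hβ j k
        rcases le_or_gt 0 (β i k) with ha | ha
        · have ha' : (0 : ℚ) ≤ (β i k : ℚ) := by exact_mod_cast ha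
          have hb' : (β k i : ℚ) ≤ 0 := by nlinarith [hdd i, hdd k, mul_nonneg (hdd i).le ha']
          have hb : β k i ≤ 0 := by exact_mod_cast hb'
          rcases le_or_gt 0 (β k j) with hc | hc
          · have hc' : (0 : ℚ) ≤ (β k j : ℚ) := by exact_mod_cast hc
            have hf' : (β j k : ℚ) ≤ 0 := by nlinarith [hdd j, hdd k, mul_nonneg (hdd k).le hc']
            have hf : β j k ≤ 0 := by exact_mod_cast hf'
            rw [intPos_of_nonneg hc, intPos_of_nonpos (by omega : -(β i k) ≤ 0),
              intPos_of_nonpos hb, intPos_of_nonneg (by omega : (0:ℤ) ≤ -(β j k))]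
            push_cast
            linear_combination h0 + (r k : ℚ) * ((β k j : ℚ) * h1 - (β k i : ℚ) * h2)
          · have hc' : (β k j : ℚ) < 0 := by exact_mod_cast hc
            have hf' : (0 : ℚ) ≤ (β j k : ℚ) := by nlinarith [hdd j, hdd k]
            have hf : (0:ℤ) ≤ β j k := by exact_mod_cast hf'
            rw [intPos_of_nonpos hc.le, intPos_of_nonpos (by omega : -(β i k) ≤ 0),
              intPos_of_nonpos hb, intPos_of_nonpos (by omega : -(β j k) ≤ 0)]
            push_cast
            linear_combination h0
        · have ha' : (β i k : ℚ) < 0 := by exact_mod_cast ha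
          have hb' : (0:ℚ) ≤ (β k i : ℚ) := by nlinarith [hdd i, hdd k]
          have hb : (0:ℤ) ≤ β k i := by exact_mod_cast hb'
          rcases le_or_gt 0 (β k j) with hc | hc
          · have hc' : (0 : ℚ) ≤ (β k j : ℚ) := by exact_mod_cast hc
            have hf' : (β j k : ℚ) ≤ 0 := by nlinarith [hdd j, hdd k, mul_nonneg (hdd k).le hc']
            have hf : β j k ≤ 0 := by exact_mod_cast hf'
            rw [intPos_of_nonneg hc, intPos_of_nonneg (by omega : (0:ℤ) ≤ -(β i k)),
              intPos_of_nonneg hb, intPos_of_nonneg (by omega : (0:ℤ) ≤ -(β j k))]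
            push_cast
            linear_combination h0
          · have hc' : (β k j : ℚ) < 0 := by exact_mod_cast hc
            have hf' : (0 : ℚ) ≤ (β j k : ℚ) := by nlinarith [hdd j, hdd k]
            have hf : (0:ℤ) ≤ β j k := by exact_mod_cast hf'
            rw [intPos_of_nonpos hc.le, intPos_of_nonneg (by omega : (0:ℤ) ≤ -(β i k)),
              intPos_of_nonneg hb, intPos_of_nonpos (by omega : -(β j k) ≤ 0)]
            push_cast
            linear_combination h0 + (r k : ℚ) * (-(β k j : ℚ) * h1 + (β k i : ℚ) * h2)
    · -- B-matrix formula
      intro d e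
      rw [hexp, MB d e]
      by_cases hd : d.1 = k <;> by_cases he : e.1 = k <;>
        simp [hd, he, hmemK, List.length_finRange]
    · -- C-matrix formula
      intro d e
      rw [hexp, MC d e]
      by_cases he : e.1 = k
      · by_cases hde : d = e <;> simp [he, hde, hmemK] <;> ring
      · simp only [he, if_false]
        rw [← Fin.sum_univ_def]
        by_cases hd : d.1 = k
        · obtain ⟨i, x⟩ := d
          dsimp at hd
          subst hd
          have hne : ¬((⟨i, x⟩ : DIdx n r) = e) := fun h => he (by rw [← h])
          have hterm : ∀ lq : Fin (r i),
              (γ (⟨i, x⟩ : DIdx n r).1 i + (if (⟨i, x⟩ : DIdx n r) = ⟨i, lq⟩ then ε i else 0))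
                  * intPos (β i e.1)
                + intPos (-(γ (⟨i, x⟩ : DIdx n r).1 i
                    + (if (⟨i, x⟩ : DIdx n r) = ⟨i, lq⟩ then ε i else 0))) * β i e.1
              = (γ i i * intPos (β i e.1) + intPos (-(γ i i)) * β i e.1)
                + (if x = lq then
                    ((γ i i + ε i) * intPos (β i e.1) + intPos (-(γ i i + ε i)) * β i e.1)
                    - (γ i i * intPos (β i e.1) + intPos (-(γ i i)) * β i e.1)
                  else 0) := by
            intro lq
            by_cases hxl : x = lq
            · subst hxl; simp
            · have : ¬((⟨i, x⟩ : DIdx n r) = ⟨i, lq⟩) := by simp [hxl]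
              simp [this, hxl]
          rw [Finset.sum_congr rfl (fun lq _ => hterm lq)]
          rw [Finset.sum_add_distrib, Finset.sum_const, Finset.sum_ite_eq]
          simp [hne]
          push_cast
          ring
        · have hterm : ∀ lq : Fin (r k),
              (γ d.1 k + (if d = ⟨k, lq⟩ then ε k else 0)) * intPos (β k e.1)
                + intPos (-(γ d.1 k + (if d = ⟨k, lq⟩ then ε k else 0))) * β k e.1
              = γ d.1 k * intPos (β k e.1) + intPos (-(γ d.1 k)) * β k e.1 := by
            intro lq
            have : ¬(d = (⟨k, lq⟩ : DIdx n r)) := fun h => hd (by rw [h])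
            simp [this]
          rw [Finset.sum_congr rfl (fun lq _ => hterm lq)]
          rw [Finset.sum_const]
          simp only [hd, he, if_false, ite_false, reduceIte, Finset.card_univ,
            Fintype.card_fin, nsmul_eq_mul]
          push_cast
          ring
    · -- equivariance of F
      intro d0
      rw [hexp, MF d0, MF (τ d0)]
      by_cases hd : d0.1 = k
      · rw [if_pos ((hmemK d0).mpr hd), if_pos ((hmemK (τ d0)).mpr (by rw [hτ d0]; exact hd))]
        exact key d0
      · rw [if_neg (fun hm => hd ((hmemK d0).mp hm)),
          if_neg (fun hm => hd (by rw [← hτ d0]; exact (hmemK (τ d0)).mp hm))]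
        exact hFτ d0
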